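/- arXiv:2109.01548 — 2 statements merged into one kernel-verified Lean document; each statement's English description precedes it below -/
import Mathlib

section
/- For any two probability density functions p₁ and p₂ (with respect to a common dominating measure), the expected absolute log-likelihood ratio satisfies E_{P₁}[|log(p₁/p₂)|] ≤ KL(P₁, P₂) + 2/e, where KL denotes the Kullback-Leibler divergence. -/
/-! Since `|y| = y + 2 y⁻`, the left side is the divergence plus twice
`∫ p₁ (log (p₁/p₂))⁻`. Pointwise, `log s ≤ s/e` at `s = p₂/p₁` gives `p₁ (log (p₁/p₂))⁻ ≤ p₂/e`
(this is `-t log t ≤ 1/e` for `t = p₁/p₂`), so that integral is at most `(∫ p₂)/e = 1/e`. -/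

open MeasureTheory

open Real in
lemma Real.log_le_div_exp_one {x : ℝ} (hx : 0 ≤ x) : log x ≤ x / exp 1 := by
  rcases hx.eq_or_lt with rfl | hx
  · simp
  have := log_le_sub_one_of_pos (div_pos hx (exp_pos 1))
  rw [log_div hx.ne' (exp_pos 1).ne', log_exp] at this
  linarith

open Real in
lemma mul_negPart_log_div_le {a b : ℝ} (hb : 0 ≤ b) : a * (log (a / b))⁻ ≤ b / exp 1 := by
  rcases le_or_gt a 0 with ha | ha
  · exact (mul_nonpos_of_nonpos_of_nonneg ha (negPart_nonneg _)).trans (by positivity)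
  have hneg : (log (a / b))⁻ ≤ b / a / exp 1 := by
    rw [negPart_def, ← log_inv, inv_div]
    exact max_le (log_le_div_exp_one (by positivity)) (by positivity)
  calc a * (log (a / b))⁻ ≤ a * (b / a / exp 1) := mul_le_mul_of_nonneg_left hneg ha.le
    _ = b / exp 1 := by field_simp

lemma mul_abs_eq_mul_add_two_mul_negPart (a y : ℝ) : a * |y| = a * y + 2 * (a * y⁻) := by
  rw [← posPart_add_negPart]
  linear_combination a * posPart_sub_negPart y

section Integral

variable {α : Type*} [MeasurableSpace α] {μ : Measure α} {f g : α → ℝ}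

lemma integrable_mul_negPart (habs : Integrable (fun x => g x * |f x|) μ)
    (h : Integrable (fun x => g x * f x) μ) : Integrable (fun x => g x * (f x)⁻) μ := by
  refine ((habs.sub h).div_const 2).congr (ae_of_all _ fun x => ?_)
  simp only [Pi.sub_apply, mul_abs_eq_mul_add_two_mul_negPart]
  ring

lemma integral_mul_abs_eq (habs : Integrable (fun x => g x * |f x|) μ)
    (h : Integrable (fun x => g x * f x) μ) :
    ∫ x, g x * |f x| ∂μ = (∫ x, g x * f x ∂μ) + 2 * ∫ x, g x * (f x)⁻ ∂μ := by
  simp only [mul_abs_eq_mul_add_two_mul_negPart]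
  rw [integral_add h ((integrable_mul_negPart habs h).const_mul 2), integral_const_mul]

lemma integral_mul_negPart_log_div_le (hg : ∀ x, 0 ≤ g x) (hg_int : Integrable g μ)
    (h : Integrable (fun x => f x * (Real.log (f x / g x))⁻) μ) :
    ∫ x, f x * (Real.log (f x / g x))⁻ ∂μ ≤ (∫ x, g x ∂μ) / Real.exp 1 := by
  rw [← integral_div]
  exact integral_mono h (hg_int.div_const _) fun x => mul_negPart_log_div_le (hg x)

end Integral

theorem abs_log_ratio_le_kl_add_general {α : Type*} [MeasurableSpace α] (μ : Measure α)
    (p₁ p₂ : α → ℝ)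
    (hp₂ : ∀ x, 0 ≤ p₂ x)
    (hint₂ : Integrable p₂ μ)
    (hd₂ : ∫ x, p₂ x ∂μ = 1)
    (habs : Integrable (fun x => p₁ x * |Real.log (p₁ x / p₂ x)|) μ)
    (hkl : Integrable (fun x => p₁ x * Real.log (p₁ x / p₂ x)) μ) :
    ∫ x, p₁ x * |Real.log (p₁ x / p₂ x)| ∂μ ≤
      (∫ x, p₁ x * Real.log (p₁ x / p₂ x) ∂μ) + 2 / Real.exp 1 := by
  have hneg := integral_mul_negPart_log_div_le hp₂ hint₂ (integrable_mul_negPart habs hkl)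
  rw [integral_mul_abs_eq habs hkl]
  grw [hneg, hd₂, mul_one_div]

theorem abs_log_ratio_le_kl_add {α : Type*} [MeasurableSpace α] (μ : Measure α)
    (p₁ p₂ : α → ℝ)
    (hp₁ : ∀ x, 0 ≤ p₁ x) (hp₂ : ∀ x, 0 ≤ p₂ x)
    (hint₁ : Integrable p₁ μ) (hint₂ : Integrable p₂ μ)
    (hd₁ : ∫ x, p₁ x ∂μ = 1) (hd₂ : ∫ x, p₂ x ∂μ = 1)
    (habs : Integrable (fun x => p₁ x * |Real.log (p₁ x / p₂ x)|) μ)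
    (hkl : Integrable (fun x => p₁ x * Real.log (p₁ x / p₂ x)) μ) :
    ∫ x, p₁ x * |Real.log (p₁ x / p₂ x)| ∂μ ≤
      (∫ x, p₁ x * Real.log (p₁ x / p₂ x) ∂μ) + 2 / Real.exp 1 :=
  abs_log_ratio_le_kl_add_general μ p₁ p₂ hp₂ hint₂ hd₂ habs hkl
end

section
/- Let hᵢ = tanh(βmᵢ + B) with |mᵢ| ≤ γ for all i, and let R be the 2×2 symmetric matrix with R₁₁ = Σᵢ mᵢ³(hᵢ-hᵢ³), R₁₂ = Σᵢ mᵢ²(hᵢ-hᵢ³), R₂₂ = Σᵢ mᵢ(hᵢ-hᵢ³). Then |det(R)| ≤ γ²·(2/(3√3))²·n²·T where T = (1/n)Σᵢ(mᵢ - m̄)² and m̄ = (1/n)Σᵢ mᵢ. -/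
/-!
With `wᵢ = hᵢ - hᵢ³`, twice the determinant is the Lagrange-type sum
`∑ᵢ ∑ⱼ (mᵢwᵢ)(mⱼwⱼ)(mᵢ - mⱼ)²`. Since `|tanh| < 1` and `|x - x³| ≤ 2/(3√3)` on `[-1, 1]`,
every `|mᵢwᵢ|` is at most `|γ| · 2/(3√3)`, and `∑ᵢ ∑ⱼ (mᵢ - mⱼ)² = 2n²T`.
-/

open Finset

theorem abs_sub_pow_three_le {x : ℝ} (hx : |x| ≤ 1) : |x - x ^ 3| ≤ 2 / (3 * √3) := by
  have hs : √3 ^ 2 = 3 := Real.sq_sqrt (by norm_num)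
  have hs3 : √3 ^ 3 = 3 * √3 := by rw [pow_succ, hs]
  have hs2 : √3 < 2 := by nlinarith [Real.sqrt_nonneg 3]
  have hpos : 0 < 3 * √3 := by positivity
  obtain ⟨hl, hr⟩ := abs_le.mp hx
  rw [abs_le, neg_le, le_div_iff₀ hpos, le_div_iff₀ hpos]
  -- `2 ∓ 3√3 (x - x³) = (√3 x ∓ 1)² (2 ± √3 x)`: the extrema at `x = ±1/√3` are double roots
  constructor
  · nlinarith [mul_nonneg (sq_nonneg (√3 * x + 1)) (by nlinarith : 0 ≤ 2 - √3 * x), hs3]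
  · nlinarith [mul_nonneg (sq_nonneg (√3 * x - 1)) (by nlinarith : 0 ≤ √3 * x + 2), hs3]

section

variable {ι R : Type*} [CommRing R] (s : Finset ι)

theorem two_mul_moment_det_eq (m w : ι → R) :
    2 * ((∑ i ∈ s, m i ^ 3 * w i) * (∑ i ∈ s, m i * w i) - (∑ i ∈ s, m i ^ 2 * w i) ^ 2) =
      ∑ i ∈ s, ∑ j ∈ s, m i * w i * (m j * w j) * (m i - m j) ^ 2 := by
  have expand : ∀ i j, m i * w i * (m j * w j) * (m i - m j) ^ 2 =
      m i ^ 3 * w i * (m j * w j) + m i * w i * (m j ^ 3 * w j)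
        - 2 * (m i ^ 2 * w i * (m j ^ 2 * w j)) := fun i j => by ring
  simp only [expand, sum_sub_distrib, sum_add_distrib, ← mul_sum, ← sum_mul]
  ring

theorem sum_sum_sub_sq (m : ι → R) :
    ∑ i ∈ s, ∑ j ∈ s, (m i - m j) ^ 2 = 2 * (#s * ∑ i ∈ s, m i ^ 2 - (∑ i ∈ s, m i) ^ 2) := by
  have expand : ∀ i j, (m i - m j) ^ 2 = m i ^ 2 + m j ^ 2 - 2 * m i * m j := fun i j => by ring
  simp only [expand, sum_sub_distrib, sum_add_distrib, ← mul_sum, ← sum_mul, sum_const,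
    nsmul_eq_mul]
  ring

end

section

variable {ι K : Type*} [Field K] [LinearOrder K] [IsStrictOrderedRing K] (s : Finset ι)

theorem card_sq_mul_variance (m : ι → K) :
    (#s : K) ^ 2 * ((1 / #s) * ∑ i ∈ s, (m i - (1 / #s) * ∑ k ∈ s, m k) ^ 2) =
      #s * ∑ i ∈ s, m i ^ 2 - (∑ i ∈ s, m i) ^ 2 := by
  rcases s.eq_empty_or_nonempty with rfl | hs
  · simp
  have hcard : (#s : K) ≠ 0 := by exact_mod_cast hs.card_ne_zero
  set μ := (1 / #s : K) * ∑ k ∈ s, m k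
  have expand : ∀ i, (m i - μ) ^ 2 = m i ^ 2 - 2 * μ * m i + μ ^ 2 := fun i => by ring
  simp only [expand, sum_sub_distrib, sum_add_distrib, ← mul_sum, sum_const, nsmul_eq_mul, μ]
  field_simp
  ring

theorem abs_sum_sum_mul_mul_le (a : ι → K) (d : ι → ι → K) {C : K}
    (ha : ∀ i ∈ s, |a i| ≤ C) (hd : ∀ i ∈ s, ∀ j ∈ s, 0 ≤ d i j) :
    |∑ i ∈ s, ∑ j ∈ s, a i * a j * d i j| ≤ C ^ 2 * ∑ i ∈ s, ∑ j ∈ s, d i j := by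
  rw [mul_sum]
  refine (abs_sum_le_sum_abs _ _).trans <| sum_le_sum fun i hi => ?_
  rw [mul_sum]
  refine (abs_sum_le_sum_abs _ _).trans <| sum_le_sum fun j hj => ?_
  have hC : 0 ≤ C := (abs_nonneg _).trans (ha i hi)
  rw [abs_mul, abs_mul, abs_of_nonneg (hd i hi j hj), sq]
  gcongr
  exacts [hd i hi j hj, ha i hi, ha j hj]

end

theorem remainder_det_bound_general (n : ℕ) (m h : Fin n → ℝ) (β B γ : ℝ)
    (hh : ∀ i, h i = Real.tanh (β * m i + B)) (hm : ∀ i, |m i| ≤ γ) :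
    |(Matrix.of ![![∑ i, m i ^ 3 * (h i - h i ^ 3), ∑ i, m i ^ 2 * (h i - h i ^ 3)],
                  ![∑ i, m i ^ 2 * (h i - h i ^ 3), ∑ i, m i * (h i - h i ^ 3)]]).det| ≤
      γ ^ 2 * (2 / (3 * Real.sqrt 3)) ^ 2 * (n : ℝ) ^ 2 *
        ((1 / n) * ∑ i, (m i - (1 / n) * ∑ k, m k) ^ 2) := by
  set w : Fin n → ℝ := fun i => h i - h i ^ 3
  have hmw : ∀ i ∈ univ, |m i * w i| ≤ |γ| * (2 / (3 * √3)) := fun i _ => by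
    rw [abs_mul, show w i = h i - h i ^ 3 from rfl, hh i]
    exact mul_le_mul ((hm i).trans (le_abs_self γ))
      (abs_sub_pow_three_le (Real.abs_tanh_lt_one _).le) (abs_nonneg _) (abs_nonneg _)
  have hvar := card_sq_mul_variance univ m
  rw [card_univ, Fintype.card_fin] at hvar
  have hpairs := sum_sum_sub_sq univ m
  rw [card_univ, Fintype.card_fin] at hpairs
  rw [Matrix.det_fin_two_of, mul_assoc, hvar, ← sq]
  calc |(∑ i, m i ^ 3 * w i) * (∑ i, m i * w i) - (∑ i, m i ^ 2 * w i) ^ 2|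
      = |∑ i, ∑ j, m i * w i * (m j * w j) * (m i - m j) ^ 2| / 2 := by
        rw [← two_mul_moment_det_eq, abs_mul, abs_two]; ring
    _ ≤ (|γ| * (2 / (3 * √3))) ^ 2 * (∑ i, ∑ j, (m i - m j) ^ 2) / 2 := by
        gcongr
        exact abs_sum_sum_mul_mul_le univ (fun i => m i * w i) _ hmw
          fun i _ j _ => sq_nonneg (m i - m j)
    _ = _ := by rw [hpairs, mul_pow, sq_abs]; ring

theorem remainder_det_bound (n : ℕ) (hn : 0 < n) (m h : Fin n → ℝ) (β B γ : ℝ)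
    (hh : ∀ i, h i = Real.tanh (β * m i + B)) (hm : ∀ i, |m i| ≤ γ) :
    |(Matrix.of ![![∑ i, m i ^ 3 * (h i - h i ^ 3), ∑ i, m i ^ 2 * (h i - h i ^ 3)],
                  ![∑ i, m i ^ 2 * (h i - h i ^ 3), ∑ i, m i * (h i - h i ^ 3)]]).det| ≤
      γ ^ 2 * (2 / (3 * Real.sqrt 3)) ^ 2 * (n : ℝ) ^ 2 *
        ((1 / n) * ∑ i, (m i - (1 / n) * ∑ k, m k) ^ 2) :=
  remainder_det_bound_general n m h β B γ hh hm
end
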